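/- arXiv:2303.09107 — 3 statements merged into one kernel-verified Lean document; each statement's English description precedes it below -/
import Mathlib

section
/- Let c₁₂, c₂₃, c₃₄, c₁₄, c₁₃ be real numbers satisfying (c₁₂ + c₂₃)² ≤ 2(1 + c₁₃) and (c₃₄ − c₁₄)² ≤ 2(1 − c₁₃), and suppose |c₁₃| ≤ 1. Then |c₁₂ + c₂₃ + c₃₄ − c₁₄| ≤ 2·√(1 + √(1 − c₁₃²)). -/
theorem stmt_3 (c12 c23 c34 c14 c13 : ℝ)
    (h1 : (c12 + c23) ^ 2 ≤ 2 * (1 + c13))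
    (h2 : (c34 - c14) ^ 2 ≤ 2 * (1 - c13))
    (h3 : |c13| ≤ 1) :
    |c12 + c23 + c34 - c14| ≤ 2 * Real.sqrt (1 + Real.sqrt (1 - c13 ^ 2)) := by
  obtain ⟨hl, hr⟩ := abs_le.mp h3
  have hc2 : (0:ℝ) ≤ 1 - c13 ^ 2 := by nlinarith
  have hs0 : 0 ≤ Real.sqrt (1 - c13 ^ 2) := Real.sqrt_nonneg _
  have hs2 : Real.sqrt (1 - c13 ^ 2) ^ 2 = 1 - c13 ^ 2 := Real.sq_sqrt hc2
  have hab2 : ((c12 + c23) * (c34 - c14)) ^ 2 ≤ (2 * Real.sqrt (1 - c13 ^ 2)) ^ 2 := by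
    nlinarith [sq_nonneg (c12 + c23), sq_nonneg (c34 - c14)]
  have hab : (c12 + c23) * (c34 - c14) ≤ 2 * Real.sqrt (1 - c13 ^ 2) := by nlinarith
  have hkey : (c12 + c23 + c34 - c14) ^ 2 ≤ 4 * (1 + Real.sqrt (1 - c13 ^ 2)) := by
    nlinarith
  calc |c12 + c23 + c34 - c14| = Real.sqrt ((c12 + c23 + c34 - c14) ^ 2) :=
        (Real.sqrt_sq_eq_abs _).symm
    _ ≤ Real.sqrt (4 * (1 + Real.sqrt (1 - c13 ^ 2))) := Real.sqrt_le_sqrt hkey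
    _ = 2 * Real.sqrt (1 + Real.sqrt (1 - c13 ^ 2)) := by
        rw [show (4:ℝ) * (1 + Real.sqrt (1 - c13 ^ 2))
              = 2 ^ 2 * (1 + Real.sqrt (1 - c13 ^ 2)) by ring,
          Real.sqrt_mul (by positivity), Real.sqrt_sq (by norm_num)]
end

section
/- For all real ω, t₁, t₂, t₃, t₄: |cos(ω(t₁−t₂)) + cos(ω(t₂−t₃)) + cos(ω(t₃−t₄)) − cos(ω(t₁−t₄))| ≤ 2·√(1 + √(1 − max{cos²(ω(t₁−t₃)), cos²(ω(t₄−t₂))})). -/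
open Real

lemma sqrt_one_add_abs_sin_two (h : ℝ) :
    Real.sqrt (1 + |Real.sin (2 * h)|) = |Real.cos h| + |Real.sin h| := by
  have key : (1 : ℝ) + |Real.sin (2 * h)| = (|Real.cos h| + |Real.sin h|) ^ 2 := by
    rw [Real.sin_two_mul, abs_mul, abs_mul, abs_two]
    nlinarith [Real.sin_sq_add_cos_sq h, sq_abs (Real.sin h), sq_abs (Real.cos h),
      abs_nonneg (Real.sin h), abs_nonneg (Real.cos h)]
  rw [key, Real.sqrt_sq (by positivity)]

lemma abs_expr_le (a b c : ℝ) :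
    |Real.cos a + Real.cos b + Real.cos c - Real.cos (a + b + c)| ≤
    2 * Real.sqrt (1 + |Real.sin (a + b)|) := by
  have h2 : Real.cos c - Real.cos (a + b + c)
      = 2 * Real.sin ((a + b + 2 * c) / 2) * Real.sin ((a + b) / 2) := by
    rw [Real.cos_sub_cos,
        show (c + (a + b + c)) / 2 = (a + b + 2 * c) / 2 by ring,
        show (c - (a + b + c)) / 2 = -((a + b) / 2) by ring, Real.sin_neg]
    ring
  have key : Real.cos a + Real.cos b + Real.cos c - Real.cos (a + b + c)
      = 2 * Real.cos ((a + b) / 2) * Real.cos ((a - b) / 2)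
        + 2 * Real.sin ((a + b + 2 * c) / 2) * Real.sin ((a + b) / 2) := by
    have h1 := Real.cos_add_cos a b
    linarith
  have hs : Real.sqrt (1 + |Real.sin (a + b)|)
      = |Real.cos ((a + b) / 2)| + |Real.sin ((a + b) / 2)| := by
    have := sqrt_one_add_abs_sin_two ((a + b) / 2)
    rwa [show 2 * ((a + b) / 2) = a + b by ring] at this
  rw [key, hs]
  have t1 : |2 * Real.cos ((a + b) / 2) * Real.cos ((a - b) / 2)| ≤ 2 * |Real.cos ((a + b) / 2)| := by
    rw [abs_mul, abs_mul, abs_two]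
    nlinarith [Real.abs_cos_le_one ((a - b) / 2), abs_nonneg (Real.cos ((a + b) / 2))]
  have t2 : |2 * Real.sin ((a + b + 2 * c) / 2) * Real.sin ((a + b) / 2)| ≤ 2 * |Real.sin ((a + b) / 2)| := by
    rw [abs_mul, abs_mul, abs_two]
    nlinarith [Real.abs_sin_le_one ((a + b + 2 * c) / 2), abs_nonneg (Real.sin ((a + b) / 2))]
  calc |2 * Real.cos ((a + b) / 2) * Real.cos ((a - b) / 2)
        + 2 * Real.sin ((a + b + 2 * c) / 2) * Real.sin ((a + b) / 2)|
      ≤ |2 * Real.cos ((a + b) / 2) * Real.cos ((a - b) / 2)|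
        + |2 * Real.sin ((a + b + 2 * c) / 2) * Real.sin ((a + b) / 2)| := abs_add_le _ _
    _ ≤ 2 * |Real.cos ((a + b) / 2)| + 2 * |Real.sin ((a + b) / 2)| := add_le_add t1 t2
    _ = 2 * (|Real.cos ((a + b) / 2)| + |Real.sin ((a + b) / 2)|) := by ring

theorem stmt_10 (ω t1 t2 t3 t4 : ℝ) :
    |Real.cos (ω * (t1 - t2)) + Real.cos (ω * (t2 - t3)) + Real.cos (ω * (t3 - t4)) -
      Real.cos (ω * (t1 - t4))| ≤
    2 * Real.sqrt (1 + Real.sqrt (1 -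
      max (Real.cos (ω * (t1 - t3)) ^ 2) (Real.cos (ω * (t4 - t2)) ^ 2))) := by
  set a := ω * (t1 - t2) with ha
  set b := ω * (t2 - t3) with hb
  set c := ω * (t3 - t4) with hc
  have habc : ω * (t1 - t4) = a + b + c := by rw [ha, hb, hc]; ring
  have hX : ω * (t1 - t3) = a + b := by rw [ha, hb]; ring
  have hY : ω * (t4 - t2) = -(b + c) := by rw [hb, hc]; ring
  rw [habc, hX, hY]
  have esq : ∀ x : ℝ, Real.sqrt (1 - Real.cos x ^ 2) = |Real.sin x| := by
    intro x
    rw [show (1 : ℝ) - Real.cos x ^ 2 = Real.sin x ^ 2 by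
      nlinarith [Real.sin_sq_add_cos_sq x], Real.sqrt_sq_eq_abs]
  have hcos2 : Real.cos (-(b + c)) ^ 2 = Real.cos (b + c) ^ 2 := by
    rw [Real.cos_neg]
  rw [hcos2]
  rcases le_total (Real.cos (a + b) ^ 2) (Real.cos (b + c) ^ 2) with hle | hle
  · rw [max_eq_right hle, esq]
    have h := abs_expr_le c b a
    have e1 : c + b + a = a + b + c := by ring
    have e2 : Real.cos c + Real.cos b + Real.cos a = Real.cos a + Real.cos b + Real.cos c := by ring
    have e3 : |Real.sin (c + b)| = |Real.sin (b + c)| := by rw [add_comm]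
    rw [e1, e2, e3] at h
    exact h
  · rw [max_eq_left hle, esq]
    exact abs_expr_le a b c
end

section
/- Let a₁, a₂, b₁, b₂, c ∈ ℝ with |c| ≤ 1 and |a₁ + a₂| ≤ √(2(1 + c)) and |b₁ − b₂| ≤ √(2(1 − c)). Then |a₁ + a₂ + b₁ − b₂| ≤ 2·√(1 + √(1 − c²)). -/
theorem stmt_18 (a1 a2 b1 b2 c : ℝ) (hc : |c| ≤ 1)
    (h1 : |a1 + a2| ≤ Real.sqrt (2 * (1 + c)))
    (h2 : |b1 - b2| ≤ Real.sqrt (2 * (1 - c))) :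
    |a1 + a2 + b1 - b2| ≤ 2 * Real.sqrt (1 + Real.sqrt (1 - c ^ 2)) := by
  obtain ⟨hc1, hc2⟩ := abs_le.mp hc
  have hp : (0:ℝ) ≤ 2 * (1 + c) := by linarith
  have hm : (0:ℝ) ≤ 2 * (1 - c) := by linarith
  have key : Real.sqrt (2 * (1 + c)) + Real.sqrt (2 * (1 - c))
      = 2 * Real.sqrt (1 + Real.sqrt (1 - c ^ 2)) := by
    have hs : (0:ℝ) ≤ Real.sqrt (1 - c ^ 2) := Real.sqrt_nonneg _
    have hL : (0:ℝ) ≤ Real.sqrt (2 * (1 + c)) + Real.sqrt (2 * (1 - c)) :=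
      add_nonneg (Real.sqrt_nonneg _) (Real.sqrt_nonneg _)
    have hR : (0:ℝ) ≤ 2 * Real.sqrt (1 + Real.sqrt (1 - c ^ 2)) := by positivity
    have hsq : (Real.sqrt (2 * (1 + c)) + Real.sqrt (2 * (1 - c)))^2
        = (2 * Real.sqrt (1 + Real.sqrt (1 - c ^ 2)))^2 := by
      have e1 : Real.sqrt (2 * (1 + c)) ^ 2 = 2 * (1 + c) := Real.sq_sqrt hp
      have e2 : Real.sqrt (2 * (1 - c)) ^ 2 = 2 * (1 - c) := Real.sq_sqrt hm
      have e3 : Real.sqrt (2 * (1 + c)) * Real.sqrt (2 * (1 - c))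
          = 2 * Real.sqrt (1 - c ^ 2) := by
        rw [← Real.sqrt_mul hp]
        have : 2 * (1 + c) * (2 * (1 - c)) = 4 * (1 - c ^ 2) := by ring
        rw [this, show (4:ℝ) * (1 - c^2) = 2^2 * (1 - c^2) by ring,
          Real.sqrt_mul (by norm_num), Real.sqrt_sq (by norm_num)]
      have e4 : Real.sqrt (1 + Real.sqrt (1 - c ^ 2)) ^ 2 = 1 + Real.sqrt (1 - c ^ 2) :=
        Real.sq_sqrt (by linarith)
      nlinarith [e1, e2, e3, e4]
    nlinarith [hsq, hL, hR]
  calc |a1 + a2 + b1 - b2| ≤ |a1 + a2| + |b1 - b2| := by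
        have := abs_add_le (a1 + a2) (b1 - b2)
        have h : a1 + a2 + b1 - b2 = (a1 + a2) + (b1 - b2) := by ring
        rw [h]; exact this
    _ ≤ Real.sqrt (2 * (1 + c)) + Real.sqrt (2 * (1 - c)) := add_le_add h1 h2
    _ = _ := key
end
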